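/- Let R be a ring and S a subset of R satisfying: (i) if ab ∈ S then a ∈ S; (ii) S is a right Ore set; (iii) every element of S is regular; (iv) Q := R[S⁻¹] is directly finite; set K := Q/R. Let M be a torsion-free right R-module and λ : M → Hom_R(K, M ⊗_R K) the canonical map λ(x)(k) = x ⊗ k. Then: (a) ker λ is the closure of 0 in the R-topology of M, namely {x ∈ M | xR ⊆ Ms for every s ∈ S}; (b) ker λ is the kernel of the canonical map η : M → M̃ into the Hausdorff completion of M in the R-topology; (c) ker λ equals h(M), the largest h-divisible submodule of M. -/

import Mathlib

/-!
STATEMENT 3: Let R be a ring and S a subset of R satisfying: (i) if ab ∈ S then a ∈ S;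
(ii) S is a right Ore set; (iii) every element of S is regular; (iv) Q := R[S⁻¹] is
directly finite; set K := Q/R. Let M be a torsion-free right R-module and
λ : M → Hom_R(K, M ⊗_R K) the canonical map λ(x)(k) = x ⊗ k. Then: (a) ker λ is the
closure of 0 in the R-topology of M, namely {x ∈ M | xR ⊆ Ms for every s ∈ S}; (b) ker λ
is the kernel of the canonical map η : M → M̃ into the Hausdorff completion of M in the
R-topology; (c) ker λ equals h(M), the largest h-divisible submodule of M.

Right `R`-modules are left `Rᵐᵒᵖ`-modules; the localization `Q`, the right `R`-module
`K := Q/R` with its left `R`-action `lmulK`, and the tensor product `T = M ⊗_R K`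
(axiomatized by its universal property) are as in the accompanying formalizations.  The
Hausdorff completion `M̃ = lim← M/U(s₁,…,sₙ)` is realized as the submodule of compatible
families in `∏_{F} M/U(F)`, where `F` runs over the finite subsets of `S` and
`U(F) = ⋂_{s ∈ F} U(s)` with `U(s) = {x | xR ⊆ Ms}`; `η` is the canonical map.  `h(M)` is
the supremum of all submodules `N` such that every element of `N` is the value at `1 ∈ Q`
of a homomorphism `Q → M` of right `R`-modules with range inside `N`.
-/

universe u
open MulOpposite

section Setting

variable (R Q : Type u) [Ring R] [Ring Q] (φ : R →+* Q) [Module Rᵐᵒᵖ Q]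
variable (hsmul : ∀ (q : Q) (r : R), op r • q = q * φ r)

/-- The image of `R` in `Q`, as a right `R`-submodule of `Q`. -/
def rsub : Submodule Rᵐᵒᵖ Q where
  carrier := Set.range φ
  zero_mem' := ⟨0, map_zero φ⟩
  add_mem' := by rintro _ _ ⟨a, rfl⟩ ⟨b, rfl⟩; exact ⟨a + b, map_add φ a b⟩
  smul_mem' := by
    rintro c _ ⟨a, rfl⟩
    refine ⟨a * c.unop, ?_⟩
    rw [map_mul, ← hsmul (φ a) c.unop, op_unop]

/-- `K := Q/R` as a right `R`-module. -/
abbrev kmod := Q ⧸ rsub R Q φ hsmul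

/-- Left multiplication by `φ r` on `Q`, as an endomorphism of the right `R`-module `Q`. -/
def lmulQ (r : R) : Q →ₗ[Rᵐᵒᵖ] Q where
  toFun q := φ r * q
  map_add' a b := mul_add _ a b
  map_smul' c q := by
    simp only [RingHom.id_apply]
    rw [← op_unop c, hsmul, hsmul, mul_assoc]

/-- The left action of `r ∈ R` on `K = Q/R`. -/
def lmulK (r : R) : kmod R Q φ hsmul →ₗ[Rᵐᵒᵖ] kmod R Q φ hsmul :=
  Submodule.mapQ _ _ (lmulQ R Q φ hsmul r) (by
    rintro _ ⟨a, rfl⟩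
    exact ⟨r * a, by simp [lmulQ, map_mul]⟩)

variable (M : Type u) [AddCommGroup M] [Module Rᵐᵒᵖ M]

/-- `U(s) = {x ∈ M | xR ⊆ Ms}`, a submodule of the right `R`-module `M`. -/
def usub (s : R) : Submodule Rᵐᵒᵖ M where
  carrier := {x | ∀ r : R, ∃ m : M, op r • x = op s • m}
  zero_mem' := fun r => ⟨0, by simp⟩
  add_mem' := by
    rintro x y hx hy r
    obtain ⟨m, hm⟩ := hx r
    obtain ⟨m', hm'⟩ := hy r
    exact ⟨m + m', by rw [smul_add, smul_add, hm, hm']⟩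
  smul_mem' := by
    rintro c x hx r
    obtain ⟨m, hm⟩ := hx (c.unop * r)
    refine ⟨m, ?_⟩
    have key : op r * c = op (c.unop * r) := by rw [op_mul, op_unop]
    rw [smul_smul, key]
    exact hm

variable (S : Submonoid R)

/-- `U(F) = ⋂_{s ∈ F} U(s)` for a finite subset `F` of `S`. -/
def ufin (F : Finset S) : Submodule Rᵐᵒᵖ M := ⨅ s ∈ F, usub R M (s : R)

lemma ufin_mono {F F' : Finset S} (h : F ⊆ F') : ufin R M S F' ≤ ufin R M S F :=
  le_iInf₂ fun s hs => iInf₂_le s (h hs)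

/-- The factor map `M/p → M/q` for `p ≤ q`. -/
def factorQ {p q : Submodule Rᵐᵒᵖ M} (h : p ≤ q) : (M ⧸ p) →ₗ[Rᵐᵒᵖ] (M ⧸ q) :=
  Submodule.mapQ p q LinearMap.id fun x hx => h hx

/-- The Hausdorff completion `M̃ = lim← M/U(s₁,…,sₙ)` of `M` in its `R`-topology, as the
submodule of compatible families in the product `∏_F M/U(F)`, `F` ranging over the finite
subsets of `S`. -/
def completionSub : Submodule Rᵐᵒᵖ (∀ F : Finset S, M ⧸ ufin R M S F) where
  carrier := {x | ∀ (F F' : Finset S) (h : F ⊆ F'),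
    factorQ R M (ufin_mono R M S h) (x F') = x F}
  zero_mem' := by intro F F' h; simp
  add_mem' := by
    intro x y hx hy F F' h
    simp only [Pi.add_apply, map_add, hx F F' h, hy F F' h]
  smul_mem' := by
    intro c x hx F F' h
    simp only [Pi.smul_apply, map_smul, hx F F' h]

/-- The canonical map `η : M → M̃`. -/
def etaFun : M → completionSub R M S := fun x =>
  ⟨fun _ => Submodule.Quotient.mk x, by
    intro F F' h
    simp [factorQ, Submodule.mapQ_apply]⟩

/-- `h(M)`: the largest h-divisible submodule of the right `R`-module `M`. -/
def hdivSub : Submodule Rᵐᵒᵖ M :=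
  sSup {N : Submodule Rᵐᵒᵖ M |
    ∀ y ∈ N, ∃ g : Q →ₗ[Rᵐᵒᵖ] M, LinearMap.range g ≤ N ∧ g 1 = y}

variable (T : Type u) [AddCommGroup T] [Module Rᵐᵒᵖ T]
variable (β : M → kmod R Q φ hsmul → T)
variable (hβ2 : ∀ x k k', β x (k + k') = β x k + β x k')
variable (hlin : ∀ (x : M) (r : R) (k : kmod R Q φ hsmul), β x (op r • k) = op r • β x k)

/-- The canonical map `λ : M → Hom_R(K, M ⊗_R K)`, `λ(x)(k) = x ⊗ k`. -/
def lam : M → (kmod R Q φ hsmul →ₗ[Rᵐᵒᵖ] T) := fun x =>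
  { toFun := β x
    map_add' := hβ2 x
    map_smul' := fun c k => by
      simp only [RingHom.id_apply]
      rw [← op_unop c]
      exact hlin x c.unop k }

end Setting

/-!
Write `M_S` for the Ore localization of `M` at `S`, and `x · q ∈ M_S` for `(x r) / s` whenever
`q φ(s) = φ(r)`. The pairing `(x, [q]) ↦ [x · q] ∈ M_S / M` is balanced, so it factors through
`M ⊗_R K`; hence `x ∈ ker λ` forces `x · Q ⊆ M`, which for torsion-free `M` says `x r ∈ M s` for all
`r ∈ R`, `s ∈ S`. Conversely, if `x r = m s` then `x ⊗ [φ(r) φ(s)⁻¹] = m ⊗ [1] = 0`. So `ker λ` is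
`⋂_{s ∈ S} U(s)`, the closure of `0`, which is plainly also `ker η`. The same set is `h(M)`: for `y`
in it, `q ↦ y · q` is a homomorphism `Q → M` taking `1` to `y`, and the image of any `g : Q → M`
lies in each `U(s)` since `g(q) r = g(q φ(r) φ(s)⁻¹) s`.
-/

namespace RTopology

open OreLocalization

theorem isLeftRegular_of_isUnit_map {R Q : Type*} [Ring R] [Ring Q] {φ : R →+* Q}
    (hinj : Function.Injective φ) {s : R} (hs : IsUnit (φ s)) : IsLeftRegular s :=
  fun a b h => hinj (hs.isRegular.left (by simpa only [map_mul] using congrArg φ h))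

theorem nonempty_oreSet_op {R : Type*} [Monoid R] {S : Submonoid R}
    (hOre : ∀ (r : R), ∀ s ∈ S, ∃ (r' s' : R), s' ∈ S ∧ r * s' = s * r')
    (hcancel : ∀ s ∈ S, IsLeftRegular s) : Nonempty (OreSet S.op) := by
  refine nonempty_oreSet_iff.mpr ⟨fun r₁ r₂ s h => ⟨1, ?_⟩, fun r s => ?_⟩
  · simpa using congrArg op (hcancel _ s.2 (congrArg unop h))
  · obtain ⟨r', s', hs', h⟩ := hOre r.unop s.1.unop s.2
    exact ⟨op r', ⟨op s', hs'⟩, congrArg op h⟩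

section TorsionFree

variable {A : Type*} [Ring A] {S : Submonoid A} [OreSet S] {X : Type*} [AddCommGroup X]
  [Module A X]

theorem eq_smul_of_oreDiv_eq_oreDiv_one (htf : ∀ s ∈ S, ∀ x : X, s • x = 0 → x = 0)
    {x m : X} {s : S} (h : x /ₒ s = m /ₒ (1 : S)) : x = (s : A) • m := by
  obtain ⟨u, v, huv, hs⟩ := oreDiv_eq_iff.mp h.symm
  rw [Submonoid.coe_one, mul_one] at hs
  refine eq_of_sub_eq_zero (htf u u.2 _ ?_)
  rw [smul_sub, ← Submonoid.smul_def, huv, ← hs, mul_smul, sub_self]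

variable (S X) in
def numeratorₗ : X →ₗ[A] OreLocalization S X where
  toFun x := x /ₒ (1 : S)
  map_add' _ _ := add_oreDiv.symm
  map_smul' a x := (smul_oreDiv_one a x).symm

theorem numeratorₗ_apply (x : X) : numeratorₗ S X x = x /ₒ (1 : S) :=
  rfl

theorem numeratorₗ_injective (htf : ∀ s ∈ S, ∀ x : X, s • x = 0 → x = 0) :
    Function.Injective (numeratorₗ S X) := by
  refine (injective_iff_map_eq_zero _).mpr fun x hx => ?_
  rw [← zero_oreDiv (1 : S)] at hx
  simpa using eq_smul_of_oreDiv_eq_oreDiv_one htf hx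

end TorsionFree

section Closure

variable {R : Type u} [Ring R] {M : Type u} [AddCommGroup M] [Module Rᵐᵒᵖ M]

variable (M) in
def closureZero (S : Submonoid R) : Submodule Rᵐᵒᵖ M := ⨅ s ∈ S, usub R M s

theorem mem_closureZero {S : Submonoid R} {x : M} :
    x ∈ closureZero M S ↔ ∀ s ∈ S, x ∈ usub R M s := by
  simp only [closureZero, Submodule.mem_iInf]

theorem etaFun_eq_zero_iff {S : Submonoid R} (x : M) :
    etaFun R M S x = 0 ↔ x ∈ closureZero M S := by
  rw [mem_closureZero]
  constructor
  · intro hx s hs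
    have h := (Submodule.Quotient.mk_eq_zero _).mp
      (congrFun (congrArg Subtype.val hx) {⟨s, hs⟩})
    simpa only [ufin, Submodule.mem_iInf, Finset.mem_singleton, forall_eq] using h
  · intro hx
    refine Subtype.ext (funext fun F => (Submodule.Quotient.mk_eq_zero _).mpr ?_)
    simp only [ufin, Submodule.mem_iInf]
    exact fun s _ => hx s s.2

end Closure

theorem apply_mem_usub {R Q M : Type u} [Ring R] [Ring Q] {φ : R →+* Q} [Module Rᵐᵒᵖ Q]
    (hsmul : ∀ (q : Q) (r : R), op r • q = q * φ r) [AddCommGroup M] [Module Rᵐᵒᵖ M]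
    (g : Q →ₗ[Rᵐᵒᵖ] M) (q : Q) {s : R} (hs : IsUnit (φ s)) :
    g q ∈ usub R M s := by
  intro r
  obtain ⟨u, hu⟩ := hs
  refine ⟨g (q * φ r * ↑u⁻¹), ?_⟩
  rw [← map_smul, ← map_smul, hsmul, hsmul, ← hu, mul_assoc (q * φ r), Units.inv_mul, mul_one]

section Fractions

variable {R Q : Type u} [Ring R] [Ring Q] {φ : R →+* Q} {S : Submonoid R} [OreSet S.op]
  {M : Type u} [AddCommGroup M] [Module Rᵐᵒᵖ M]

theorem oreDiv_eq_of_mul_eq (hinj : Function.Injective φ) (x : M) {q : Q} {r s r' s' : R}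
    (hs : s ∈ S) (hs' : s' ∈ S) (h : q * φ s = φ r) (h' : q * φ s' = φ r') :
    (op r • x) /ₒ (⟨op s, hs⟩ : S.op) = (op r' • x) /ₒ (⟨op s', hs'⟩ : S.op) := by
  obtain ⟨v, u, huv⟩ : ∃ (v : Rᵐᵒᵖ) (u : S.op), u * op s' = v * op s :=
    ⟨oreNum _ (⟨op s, hs⟩ : S.op), oreDenom _ _, ore_eq _ _⟩
  have huv' : s' * (u : Rᵐᵒᵖ).unop = s * v.unop := congrArg unop huv
  have hnum : r' * (u : Rᵐᵒᵖ).unop = r * v.unop := hinj <| by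
    rw [map_mul, ← h', mul_assoc, ← map_mul, huv', map_mul, ← mul_assoc, h, map_mul]
  refine oreDiv_eq_iff.mpr ⟨u, v, ?_, huv⟩
  rw [Submonoid.smul_def, smul_smul, smul_smul, ← op_unop (u : Rᵐᵒᵖ), ← op_unop v, ← op_mul,
    ← op_mul, hnum]

variable (hfrac : ∀ q : Q, ∃ (r : R) (s : R), s ∈ S ∧ q * φ s = φ r)

noncomputable def fracSMul (x : M) (q : Q) : OreLocalization S.op M :=
  (op (hfrac q).choose • x) /ₒ
    (⟨op (hfrac q).choose_spec.choose, (hfrac q).choose_spec.choose_spec.1⟩ : S.op)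

theorem fracSMul_eq (hinj : Function.Injective φ) (x : M) {q : Q} {r s : R} (hs : s ∈ S)
    (h : q * φ s = φ r) : fracSMul hfrac x q = (op r • x) /ₒ (⟨op s, hs⟩ : S.op) :=
  oreDiv_eq_of_mul_eq hinj x _ hs (hfrac q).choose_spec.choose_spec.2 h

theorem fracSMul_add_left (x y : M) (q : Q) :
    fracSMul hfrac (x + y) q = fracSMul hfrac x q + fracSMul hfrac y q := by
  rw [fracSMul, fracSMul, fracSMul, add_oreDiv, smul_add]

theorem fracSMul_op_smul (hinj : Function.Injective φ) (x : M) (r : R) (q : Q) :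
    fracSMul hfrac (op r • x) q = fracSMul hfrac x (φ r * q) := by
  obtain ⟨r₁, s₁, hs₁, h₁⟩ := hfrac q
  have h₂ : φ r * q * φ s₁ = φ (r * r₁) := by rw [mul_assoc, h₁, map_mul]
  rw [fracSMul_eq hfrac hinj _ hs₁ h₁, fracSMul_eq hfrac hinj _ hs₁ h₂, smul_smul, ← op_mul]

theorem fracSMul_map (hinj : Function.Injective φ) (x : M) (a : R) :
    fracSMul hfrac x (φ a) = numeratorₗ S.op M (op a • x) :=
  fracSMul_eq hfrac hinj x S.one_mem (by rw [map_one, mul_one])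

theorem fracSMul_add_right (hinj : Function.Injective φ) (x : M) (q q' : Q) :
    fracSMul hfrac x (q + q') = fracSMul hfrac x q + fracSMul hfrac x q' := by
  obtain ⟨r, s, hs, h⟩ := hfrac q
  obtain ⟨r', s', hs', h'⟩ := hfrac q'
  obtain ⟨v, u, huv⟩ : ∃ (v : Rᵐᵒᵖ) (u : S.op), u * op s = v * op s' :=
    ⟨oreNum _ (⟨op s', hs'⟩ : S.op), oreDenom _ _, ore_eq _ _⟩
  have huv' : s * (u : Rᵐᵒᵖ).unop = s' * v.unop := congrArg unop huv
  have hmem : s * (u : Rᵐᵒᵖ).unop ∈ S := S.mul_mem hs u.2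
  have hq : q * φ (s * (u : Rᵐᵒᵖ).unop) = φ (r * (u : Rᵐᵒᵖ).unop) := by
    rw [map_mul, map_mul, ← mul_assoc, h]
  have hq' : q' * φ (s * (u : Rᵐᵒᵖ).unop) = φ (r' * v.unop) := by
    rw [huv', map_mul, map_mul, ← mul_assoc, h']
  have hsum : (q + q') * φ (s * (u : Rᵐᵒᵖ).unop) = φ (r * (u : Rᵐᵒᵖ).unop + r' * v.unop) := by
    rw [add_mul, hq, hq', map_add]
  rw [fracSMul_eq hfrac hinj x hmem hsum, fracSMul_eq hfrac hinj x hmem hq,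
    fracSMul_eq hfrac hinj x hmem hq', add_oreDiv, op_add, add_smul]

theorem fracSMul_smul [Module Rᵐᵒᵖ Q] (hsmul : ∀ (q : Q) (r : R), op r • q = q * φ r)
    (hinj : Function.Injective φ) (x : M) (c : Rᵐᵒᵖ) (q : Q) :
    fracSMul hfrac x (c • q) = c • fracSMul hfrac x q := by
  obtain ⟨r, s, hs, h⟩ := hfrac q
  set t : S.op := ⟨op s, hs⟩
  have hore' : c.unop * (oreDenom c t : Rᵐᵒᵖ).unop = s * (oreNum c t).unop :=
    congrArg unop (ore_eq c t)
  have hcq : c • q * φ (oreDenom c t : Rᵐᵒᵖ).unop = φ (r * (oreNum c t).unop) := by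
    rw [show c • q = q * φ c.unop from hsmul q c.unop, mul_assoc, ← map_mul, hore', map_mul,
      ← mul_assoc, h, ← map_mul]
  rw [fracSMul_eq hfrac hinj x (oreDenom c t).2 hcq, fracSMul_eq hfrac hinj x hs h,
    smul_oreDiv, smul_eq_mul, mul_one, smul_smul, op_mul, op_unop]
  rfl

theorem mem_closureZero_iff_fracSMul_mem_range (hinj : Function.Injective φ)
    (htf : ∀ s ∈ S, ∀ x : M, op s • x = 0 → x = 0)
    (hunit : ∀ s ∈ S, IsUnit (φ s)) (x : M) :
    x ∈ closureZero M S ↔ ∀ q, fracSMul hfrac x q ∈ LinearMap.range (numeratorₗ S.op M) := by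
  rw [mem_closureZero]
  constructor
  · intro hx q
    obtain ⟨r, s, hs, h⟩ := hfrac q
    obtain ⟨m, hm⟩ := hx s hs r
    refine ⟨m, ?_⟩
    rw [fracSMul_eq hfrac hinj x hs h, hm, numeratorₗ_apply,
      OreLocalization.expand' m 1 (⟨op s, hs⟩ : S.op), mul_one, Submonoid.smul_def]
  · intro hx s hs r
    obtain ⟨u, hu⟩ := hunit s hs
    have h : φ r * ↑u⁻¹ * φ s = φ r := by rw [← hu, mul_assoc, Units.inv_mul, mul_one]
    obtain ⟨m, hm⟩ := hx (φ r * ↑u⁻¹)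
    rw [fracSMul_eq hfrac hinj x hs h] at hm
    exact ⟨m, eq_smul_of_oreDiv_eq_oreDiv_one (fun s hs x => htf s.unop hs x) hm.symm⟩

end Fractions

section TensorK

variable {R Q : Type u} [Ring R] [Ring Q] {φ : R →+* Q} [Module Rᵐᵒᵖ Q]
  {hsmul : ∀ (q : Q) (r : R), op r • q = q * φ r} {S : Submonoid R}
  {M : Type u} [AddCommGroup M] [Module Rᵐᵒᵖ M]

theorem lmulK_mk (r : R) (q : Q) :
    lmulK R Q φ hsmul r (Submodule.Quotient.mk q) = Submodule.Quotient.mk (φ r * q) :=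
  rfl

theorem eq_zero_of_mem_closureZero {T : Type*} [AddCommGroup T]
    (β : M → kmod R Q φ hsmul → T) (hβ2 : ∀ x k k', β x (k + k') = β x k + β x k')
    (hbal : ∀ (x : M) (r : R) (k : kmod R Q φ hsmul),
      β (op r • x) k = β x (lmulK R Q φ hsmul r k))
    (hunit : ∀ s ∈ S, IsUnit (φ s)) (hfrac : ∀ q : Q, ∃ (r : R) (s : R), s ∈ S ∧ q * φ s = φ r)
    {x : M} (hx : x ∈ closureZero M S) (k : kmod R Q φ hsmul) : β x k = 0 := by
  induction k using Submodule.Quotient.induction_on with | _ q => ?_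
  obtain ⟨r, s, hs, hq⟩ := hfrac q
  obtain ⟨u, hu⟩ := hunit s hs
  obtain ⟨m, hm⟩ := mem_closureZero.mp hx s hs r
  have hq' : q = φ r * ↑u⁻¹ := by rw [← hq, mul_assoc, ← hu, Units.mul_inv, mul_one]
  have hβ0 : β m 0 = 0 := left_eq_add.mp (by rw [← hβ2, add_zero] : β m 0 = β m 0 + β m 0)
  have hone : (Submodule.Quotient.mk 1 : kmod R Q φ hsmul) = 0 :=
    (Submodule.Quotient.mk_eq_zero _).mpr ⟨1, map_one φ⟩
  calc β x (Submodule.Quotient.mk q)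
      = β (op r • x) (Submodule.Quotient.mk ↑u⁻¹) := by rw [hbal, lmulK_mk, hq']
    _ = β m (Submodule.Quotient.mk (φ s * ↑u⁻¹)) := by rw [hm, hbal, lmulK_mk]
    _ = 0 := by rw [← hu, Units.mul_inv, hone, hβ0]

variable [OreSet S.op] (hinj : Function.Injective φ)
  (hfrac : ∀ q : Q, ∃ (r : R) (s : R), s ∈ S ∧ q * φ s = φ r)

variable (hsmul) in
noncomputable def fracSMulₗ (x : M) : Q →ₗ[Rᵐᵒᵖ] OreLocalization S.op M where
  toFun := fracSMul hfrac x
  map_add' := fracSMul_add_right hfrac hinj x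
  map_smul' := fracSMul_smul hfrac hsmul hinj x

theorem fracSMulₗ_apply (x : M) (q : Q) :
    fracSMulₗ hsmul hinj hfrac x q = fracSMul hfrac x q :=
  rfl

noncomputable def fracSMulQuot (x : M) :
    kmod R Q φ hsmul →ₗ[Rᵐᵒᵖ] OreLocalization S.op M ⧸ LinearMap.range (numeratorₗ S.op M) :=
  Submodule.mapQ _ _ (fracSMulₗ hsmul hinj hfrac x) <| by
    rintro _ ⟨a, rfl⟩
    exact ⟨op a • x, (fracSMul_map hfrac hinj x a).symm⟩

theorem fracSMulQuot_mk (x : M) (q : Q) :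
    fracSMulQuot hinj hfrac x (Submodule.Quotient.mk q : kmod R Q φ hsmul)
      = Submodule.Quotient.mk (fracSMul hfrac x q) :=
  rfl

theorem fracSMulQuot_add_left (x y : M) (k : kmod R Q φ hsmul) :
    fracSMulQuot hinj hfrac (x + y) k
      = fracSMulQuot hinj hfrac x k + fracSMulQuot hinj hfrac y k := by
  induction k using Submodule.Quotient.induction_on with | _ q => ?_
  rw [fracSMulQuot_mk, fracSMulQuot_mk, fracSMulQuot_mk, fracSMul_add_left,
    Submodule.Quotient.mk_add]

theorem fracSMulQuot_op_smul (x : M) (r : R) (k : kmod R Q φ hsmul) :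
    fracSMulQuot hinj hfrac (op r • x) k
      = fracSMulQuot hinj hfrac x (lmulK R Q φ hsmul r k) := by
  induction k using Submodule.Quotient.induction_on with | _ q => ?_
  rw [lmulK_mk, fracSMulQuot_mk, fracSMulQuot_mk, fracSMul_op_smul hfrac hinj]

end TensorK

section Kernel

variable {R Q : Type u} [Ring R] [Ring Q] {φ : R →+* Q} [Module Rᵐᵒᵖ Q] {S : Submonoid R}
  [OreSet S.op] {M : Type u} [AddCommGroup M] [Module Rᵐᵒᵖ M]

theorem lam_eq_zero_iff {hsmul : ∀ (q : Q) (r : R), op r • q = q * φ r}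
    {T : Type u} [AddCommGroup T] [Module Rᵐᵒᵖ T]
    (hinj : Function.Injective φ) (hunit : ∀ s ∈ S, IsUnit (φ s))
    (hfrac : ∀ q : Q, ∃ (r : R) (s : R), s ∈ S ∧ q * φ s = φ r)
    (htf : ∀ s ∈ S, ∀ x : M, op s • x = 0 → x = 0)
    (β : M → kmod R Q φ hsmul → T) (hβ2 : ∀ x k k', β x (k + k') = β x k + β x k')
    (hbal : ∀ (x : M) (r : R) (k : kmod R Q φ hsmul),
      β (op r • x) k = β x (lmulK R Q φ hsmul r k))
    (hlin : ∀ (x : M) (r : R) (k : kmod R Q φ hsmul), β x (op r • k) = op r • β x k)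
    (huniv : ∀ (A : Type u) [AddCommGroup A] (b : M → kmod R Q φ hsmul → A),
      (∀ x y k, b (x + y) k = b x k + b y k) →
      (∀ x k k', b x (k + k') = b x k + b x k') →
      (∀ (x : M) (r : R) (k : kmod R Q φ hsmul),
        b (op r • x) k = b x (lmulK R Q φ hsmul r k)) →
      ∃! h : T →+ A, ∀ x k, h (β x k) = b x k) (x : M) :
    lam R Q φ hsmul M T β hβ2 hlin x = 0 ↔ x ∈ closureZero M S := by
  refine ⟨fun hx => ?_, fun hx =>
    LinearMap.ext (eq_zero_of_mem_closureZero β hβ2 hbal hunit hfrac hx)⟩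
  obtain ⟨g, hg, -⟩ := huniv _ (fun x => fracSMulQuot hinj hfrac x)
    (fracSMulQuot_add_left hinj hfrac) (fun x => map_add _) (fracSMulQuot_op_smul hinj hfrac)
  refine (mem_closureZero_iff_fracSMul_mem_range hfrac hinj htf hunit x).mpr fun q => ?_
  have h0 := hg x (Submodule.Quotient.mk q)
  rw [show β x _ = 0 from LinearMap.congr_fun hx _, map_zero, fracSMulQuot_mk] at h0
  exact (Submodule.Quotient.mk_eq_zero _).mp h0.symm

theorem exists_linearMap_apply_one_eq (hsmul : ∀ (q : Q) (r : R), op r • q = q * φ r)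
    (hinj : Function.Injective φ)
    (hunit : ∀ s ∈ S, IsUnit (φ s)) (hfrac : ∀ q : Q, ∃ (r : R) (s : R), s ∈ S ∧ q * φ s = φ r)
    (htf : ∀ s ∈ S, ∀ x : M, op s • x = 0 → x = 0) {y : M} (hy : y ∈ closureZero M S) :
    ∃ g : Q →ₗ[Rᵐᵒᵖ] M, g 1 = y := by
  have hrange : ∀ q, fracSMulₗ hsmul hinj hfrac y q ∈ LinearMap.range (numeratorₗ S.op M) :=
    (mem_closureZero_iff_fracSMul_mem_range hfrac hinj htf hunit y).mp hy
  let ι := LinearEquiv.ofInjective _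
    (numeratorₗ_injective (S := S.op) fun s hs x => htf s.unop hs x)
  refine ⟨ι.symm.toLinearMap ∘ₗ (fracSMulₗ hsmul hinj hfrac y).codRestrict _ hrange, ?_⟩
  rw [LinearMap.comp_apply, LinearEquiv.coe_coe, LinearEquiv.symm_apply_eq]
  ext1
  rw [LinearMap.codRestrict_apply, LinearEquiv.ofInjective_apply, fracSMulₗ_apply]
  simpa using fracSMul_map hfrac hinj y 1

theorem hdivSub_eq_closureZero (hsmul : ∀ (q : Q) (r : R), op r • q = q * φ r)
    (hinj : Function.Injective φ) (hunit : ∀ s ∈ S, IsUnit (φ s))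
    (hfrac : ∀ q : Q, ∃ (r : R) (s : R), s ∈ S ∧ q * φ s = φ r)
    (htf : ∀ s ∈ S, ∀ x : M, op s • x = 0 → x = 0) :
    hdivSub R Q M = closureZero M S := by
  have apply_mem (g : Q →ₗ[Rᵐᵒᵖ] M) (q : Q) : g q ∈ closureZero M S :=
    mem_closureZero.mpr fun s hs => apply_mem_usub hsmul g q (hunit s hs)
  refine le_antisymm (sSup_le fun N hN y hy => ?_) (le_sSup fun y hy => ?_)
  · obtain ⟨g, -, rfl⟩ := hN y hy
    exact apply_mem g 1
  · obtain ⟨g, hg⟩ := exists_linearMap_apply_one_eq hsmul hinj hunit hfrac htf hy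
    exact ⟨g, LinearMap.range_le_iff_comap.mpr (eq_top_iff.mpr fun q _ => apply_mem g q), hg⟩

end Kernel

end RTopology

open RTopology

theorem stmt3_general (R Q : Type u) [Ring R] [Ring Q] (S : Submonoid R) (φ : R →+* Q)
    [Module Rᵐᵒᵖ Q] (hsmul : ∀ (q : Q) (r : R), op r • q = q * φ r)
    (hOre : ∀ (r : R), ∀ s ∈ S, ∃ (r' s' : R), s' ∈ S ∧ r * s' = s * r')
    (hinj : Function.Injective φ)
    (hunit : ∀ s ∈ S, IsUnit (φ s))
    (hfrac : ∀ q : Q, ∃ (r : R) (s : R), s ∈ S ∧ q * φ s = φ r)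
    (M T : Type u) [AddCommGroup M] [Module Rᵐᵒᵖ M] [AddCommGroup T] [Module Rᵐᵒᵖ T]
    -- `M` is torsion-free
    (htf : ∀ s ∈ S, ∀ x : M, op s • x = 0 → x = 0)
    -- `T` is the tensor product `M ⊗_R K`
    (β : M → kmod R Q φ hsmul → T)
    (hβ2 : ∀ x k k', β x (k + k') = β x k + β x k')
    (hbal : ∀ (x : M) (r : R) (k : kmod R Q φ hsmul),
      β (op r • x) k = β x (lmulK R Q φ hsmul r k))
    (hlin : ∀ (x : M) (r : R) (k : kmod R Q φ hsmul), β x (op r • k) = op r • β x k)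
    (huniv : ∀ (A : Type u) [AddCommGroup A] (b : M → kmod R Q φ hsmul → A),
      (∀ x y k, b (x + y) k = b x k + b y k) →
      (∀ x k k', b x (k + k') = b x k + b x k') →
      (∀ (x : M) (r : R) (k : kmod R Q φ hsmul),
        b (op r • x) k = b x (lmulK R Q φ hsmul r k)) →
      ∃! h : T →+ A, ∀ x k, h (β x k) = b x k) :
    -- (a) `ker λ` is the closure of `0` in the `R`-topology of `M`
    {x : M | lam R Q φ hsmul M T β hβ2 hlin x = 0}
      = {x : M | ∀ s ∈ S, ∀ r : R, ∃ m : M, op r • x = op s • m} ∧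
    -- (b) `ker λ = ker η`
    {x : M | lam R Q φ hsmul M T β hβ2 hlin x = 0}
      = {x : M | etaFun R M S x = 0} ∧
    -- (c) `ker λ = h(M)`
    {x : M | lam R Q φ hsmul M T β hβ2 hlin x = 0} = ↑(hdivSub R Q M) := by
  obtain ⟨_⟩ := nonempty_oreSet_op hOre fun s hs => isLeftRegular_of_isUnit_map hinj (hunit s hs)
  have hker := lam_eq_zero_iff hinj hunit hfrac htf β hβ2 hbal hlin huniv
  refine ⟨?_, ?_, ?_⟩ <;> ext x
  · exact (hker x).trans mem_closureZero
  · exact (hker x).trans (etaFun_eq_zero_iff x).symm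
  · rw [hdivSub_eq_closureZero hsmul hinj hunit hfrac htf]
    exact hker x

theorem stmt3 (R Q : Type u) [Ring R] [Ring Q] (S : Submonoid R) (φ : R →+* Q)
    [Module Rᵐᵒᵖ Q] (hsmul : ∀ (q : Q) (r : R), op r • q = q * φ r)
    (hsat : ∀ a b : R, a * b ∈ S → a ∈ S)
    (hOre : ∀ (r : R), ∀ s ∈ S, ∃ (r' s' : R), s' ∈ S ∧ r * s' = s * r')
    (hreg : ∀ s ∈ S, IsRegular s)
    (hdf : ∀ a b : Q, a * b = 1 → b * a = 1)
    (hinj : Function.Injective φ)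
    (hunit : ∀ s ∈ S, IsUnit (φ s))
    (hfrac : ∀ q : Q, ∃ (r : R) (s : R), s ∈ S ∧ q * φ s = φ r)
    (M T : Type u) [AddCommGroup M] [Module Rᵐᵒᵖ M] [AddCommGroup T] [Module Rᵐᵒᵖ T]
    -- `M` is torsion-free
    (htf : ∀ s ∈ S, ∀ x : M, op s • x = 0 → x = 0)
    -- `T` is the tensor product `M ⊗_R K`
    (β : M → kmod R Q φ hsmul → T)
    (hβ1 : ∀ x y k, β (x + y) k = β x k + β y k)
    (hβ2 : ∀ x k k', β x (k + k') = β x k + β x k')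
    (hbal : ∀ (x : M) (r : R) (k : kmod R Q φ hsmul),
      β (op r • x) k = β x (lmulK R Q φ hsmul r k))
    (hlin : ∀ (x : M) (r : R) (k : kmod R Q φ hsmul), β x (op r • k) = op r • β x k)
    (huniv : ∀ (A : Type u) [AddCommGroup A] (b : M → kmod R Q φ hsmul → A),
      (∀ x y k, b (x + y) k = b x k + b y k) →
      (∀ x k k', b x (k + k') = b x k + b x k') →
      (∀ (x : M) (r : R) (k : kmod R Q φ hsmul),
        b (op r • x) k = b x (lmulK R Q φ hsmul r k)) →
      ∃! h : T →+ A, ∀ x k, h (β x k) = b x k) :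
    -- (a) `ker λ` is the closure of `0` in the `R`-topology of `M`
    {x : M | lam R Q φ hsmul M T β hβ2 hlin x = 0}
      = {x : M | ∀ s ∈ S, ∀ r : R, ∃ m : M, op r • x = op s • m} ∧
    -- (b) `ker λ = ker η`
    {x : M | lam R Q φ hsmul M T β hβ2 hlin x = 0}
      = {x : M | etaFun R M S x = 0} ∧
    -- (c) `ker λ = h(M)`
    {x : M | lam R Q φ hsmul M T β hβ2 hlin x = 0} = ↑(hdivSub R Q M) :=
  stmt3_general R Q S φ hsmul hOre hinj hunit hfrac M T htf β hβ2 hbal hlin huniv
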